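/- arXiv:1304.4818 — 2 statements merged into one kernel-verified Lean document; each statement's English description precedes it below -/
import Mathlib

section
/- Let V : ℝⁿ × ℝ → ℝ be smooth, with V(p,t) − B ≥ 1 for all (p,t) ∈ ℝⁿ × [−T, T] for some constants B ∈ ℝ, T > 0, and ∂V/∂t(p,t) ≤ A·(V(p,t) − B) on ℝⁿ × [−T, T] for some A > 0. Let γ : [0, b) → ℝⁿ, b < T, solve γ'' = −∇ₓV(γ, t), and set v(t) = ½|γ'(t)|² + V(γ(t), t) − B. Then v(t) ≤ v(0)·e^{A t} for all t ∈ [0, b), and consequently |γ'(t)|² ≤ 2 v(0) e^{A b} for all t ∈ [0, b). -/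
open scoped RealInnerProductSpace

/-- inner with gradient equals fderiv applied. -/
lemma inner_gradient_apply {F : Type*} [NormedAddCommGroup F] [InnerProductSpace ℝ F]
    [CompleteSpace F] (f : F → ℝ) (p u : F) :
    ⟪gradient f p, u⟫ = fderiv ℝ f p u := by
  rw [gradient, ← InnerProductSpace.toDual_apply_apply, LinearIsometryEquiv.apply_symm_apply]

/-- Key energy estimate: if V − B ≥ 1 and ∂V/∂t ≤ A(V − B) on ℝⁿ × [−T,T] and
γ solves γ'' = −∇ₓV(γ,t) on [0,b), b < T, then the energy
v(t) = ½|γ'(t)|² + V(γ(t),t) − B satisfies v(t) ≤ v(0)e^{At} and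
|γ'(t)|² ≤ 2 v(0) e^{Ab}. -/
theorem stmt10 (n : ℕ) (V : EuclideanSpace ℝ (Fin n) × ℝ → ℝ)
    (hV : ContDiff ℝ (⊤ : ℕ∞) V)
    (B T A : ℝ) (hT : 0 < T) (hA : 0 < A)
    (hlow : ∀ p, ∀ t ∈ Set.Icc (-T) T, 1 ≤ V (p, t) - B)
    (hdt : ∀ p, ∀ t ∈ Set.Icc (-T) T,
      deriv (fun s => V (p, s)) t ≤ A * (V (p, t) - B))
    (b : ℝ) (hb : 0 < b) (hbT : b < T)
    (γ γ' γ'' : ℝ → EuclideanSpace ℝ (Fin n))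
    (hγ : ∀ t ∈ Set.Ico (0:ℝ) b, HasDerivAt γ (γ' t) t)
    (hγ' : ∀ t ∈ Set.Ico (0:ℝ) b, HasDerivAt γ' (γ'' t) t)
    (heq : ∀ t ∈ Set.Ico (0:ℝ) b,
      γ'' t = - gradient (fun x => V (x, t)) (γ t)) :
    (∀ t ∈ Set.Ico (0:ℝ) b,
      (1/2 : ℝ) * ‖γ' t‖^2 + V (γ t, t) - B ≤
        ((1/2 : ℝ) * ‖γ' 0‖^2 + V (γ 0, 0) - B) * Real.exp (A * t)) ∧
    ∀ t ∈ Set.Ico (0:ℝ) b,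
      ‖γ' t‖^2 ≤ 2 * ((1/2 : ℝ) * ‖γ' 0‖^2 + V (γ 0, 0) - B) * Real.exp (A * b) := by
  set v : ℝ → ℝ := fun t => (1/2 : ℝ) * ‖γ' t‖^2 + V (γ t, t) - B with hv
  have hIcoIcc : ∀ t ∈ Set.Ico (0:ℝ) b, t ∈ Set.Icc (-T) T := fun t ht =>
    ⟨by linarith [ht.1], le_of_lt (lt_trans ht.2 hbT)⟩
  have hVdiff : Differentiable ℝ V := hV.differentiable (by simp)
  -- derivative of v
  have hvd : ∀ t ∈ Set.Ico (0:ℝ) b,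
      HasDerivAt v (deriv (fun s => V (γ t, s)) t) t := by
    intro t ht
    have hc : HasDerivAt (fun s => (γ s, s)) (γ' t, (1:ℝ)) t :=
      (hγ t ht).prodMk (hasDerivAt_id t)
    have hVz := (hVdiff (γ t, t)).hasFDerivAt
    have hVcomp : HasDerivAt (fun s => V (γ s, s))
        (fderiv ℝ V (γ t, t) (γ' t, (1:ℝ))) t := by
      exact hVz.comp_hasDerivAt_of_eq t hc rfl
    -- the time-partial derivative
    have htime : HasDerivAt (fun s => V (γ t, s))
        (fderiv ℝ V (γ t, t) ((0 : EuclideanSpace ℝ (Fin n)), (1:ℝ))) t := by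
      have h2 : HasDerivAt (fun s : ℝ => ((γ t), s)) ((0 : EuclideanSpace ℝ (Fin n)), (1:ℝ)) t :=
        (hasDerivAt_const t (γ t)).prodMk (hasDerivAt_id t)
      exact hVz.comp_hasDerivAt_of_eq t h2 rfl
    -- the space-partial derivative
    have hspace : HasFDerivAt (fun x : EuclideanSpace ℝ (Fin n) => V (x, t))
        ((fderiv ℝ V (γ t, t)).comp (ContinuousLinearMap.inl ℝ (EuclideanSpace ℝ (Fin n)) ℝ)) (γ t) :=
      hVz.comp (γ t) (hasFDerivAt_prodMk_left (γ t) t)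
    have hgrad : ∀ u : EuclideanSpace ℝ (Fin n), ⟪gradient (fun x : EuclideanSpace ℝ (Fin n) => V (x, t)) (γ t), u⟫
        = fderiv ℝ V (γ t, t) (u, (0:ℝ)) := by
      intro u
      rw [inner_gradient_apply, hspace.fderiv]
      rfl
    -- norm squared derivative
    have hnorm : HasDerivAt (fun s => (1/2 : ℝ) * ‖γ' s‖^2)
        (⟪γ'' t, γ' t⟫) t := by
      have := ((hγ' t ht).inner ℝ (hγ' t ht)).const_mul (1/2 : ℝ)
      have h2 : (1/2 : ℝ) * (⟪γ' t, γ'' t⟫ + ⟪γ'' t, γ' t⟫) = ⟪γ'' t, γ' t⟫ := by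
        rw [real_inner_comm (γ' t) (γ'' t)]; ring
      rw [h2] at this
      refine this.congr_of_eventuallyEq (Filter.Eventually.of_forall fun s => ?_)
      show (1/2 : ℝ) * ‖γ' s‖^2 = (1/2 : ℝ) * ⟪γ' s, γ' s⟫
      rw [real_inner_self_eq_norm_sq]
    have hsum : HasDerivAt v (⟪γ'' t, γ' t⟫ + fderiv ℝ V (γ t, t) (γ' t, (1:ℝ))) t :=
      (hnorm.add hVcomp).sub_const B
    have hdecomp : fderiv ℝ V (γ t, t) (γ' t, (1:ℝ))
        = fderiv ℝ V (γ t, t) (γ' t, (0:ℝ)) + fderiv ℝ V (γ t, t) ((0 : EuclideanSpace ℝ (Fin n)), (1:ℝ)) := by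
      rw [← ContinuousLinearMap.map_add]
      norm_num
    have hcancel : ⟪γ'' t, γ' t⟫ + fderiv ℝ V (γ t, t) (γ' t, (1:ℝ))
        = fderiv ℝ V (γ t, t) ((0 : EuclideanSpace ℝ (Fin n)), (1:ℝ)) := by
      rw [hdecomp, heq t ht, inner_neg_left, hgrad (γ' t)]
      ring
    rw [hcancel] at hsum
    rw [htime.deriv]
    exact hsum
  -- derivative bound
  have hbound : ∀ t ∈ Set.Ico (0:ℝ) b,
      deriv (fun s => V (γ t, s)) t ≤ A * v t := by
    intro t ht
    have h1 := hdt (γ t) t (hIcoIcc t ht)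
    have h2 : A * (V (γ t, t) - B) ≤ A * v t := by
      apply mul_le_mul_of_nonneg_left _ hA.le
      have : 0 ≤ (1/2 : ℝ) * ‖γ' t‖^2 := by positivity
      simp only [hv]; linarith
    linarith
  -- Gronwall via the auxiliary function g = v * exp(-A t)
  have key : ∀ t ∈ Set.Ico (0:ℝ) b, v t ≤ v 0 * Real.exp (A * t) := by
    intro t ht
    rcases eq_or_lt_of_le ht.1 with h0 | h0
    · rw [← h0]; simp
    · set g : ℝ → ℝ := fun s => v s * Real.exp (-A * s) with hg
      have hgderiv : ∀ s ∈ Set.Ico (0:ℝ) b, HasDerivAt g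
          ((deriv (fun u => V (γ s, u)) s - A * v s) * Real.exp (-A * s)) s := by
        intro s hs
        have he : HasDerivAt (fun u : ℝ => Real.exp (-A * u)) (-A * Real.exp (-A * s)) s := by
          have := (Real.hasDerivAt_exp (-A * s)).comp s
            ((hasDerivAt_id s).const_mul (-A))
          exact this.congr_deriv (by ring)
        have := (hvd s hs).mul he
        exact this.congr_deriv (by ring)
      have hmono : AntitoneOn g (Set.Icc 0 t) := by
        apply antitoneOn_of_deriv_nonpos (convex_Icc 0 t)
        · apply ContinuousOn.mono _ (by intro x hx; exact hx)
          intro x hx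
          have hxIco : x ∈ Set.Ico (0:ℝ) b := ⟨hx.1, lt_of_le_of_lt hx.2 ht.2⟩
          exact (hgderiv x hxIco).continuousAt.continuousWithinAt
        · intro x hx
          rw [interior_Icc] at hx
          have hxIco : x ∈ Set.Ico (0:ℝ) b := ⟨hx.1.le, lt_trans hx.2 ht.2⟩
          exact (hgderiv x hxIco).differentiableAt.differentiableWithinAt
        · intro x hx
          rw [interior_Icc] at hx
          have hxIco : x ∈ Set.Ico (0:ℝ) b := ⟨hx.1.le, lt_trans hx.2 ht.2⟩
          rw [(hgderiv x hxIco).deriv]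
          have := hbound x hxIco
          have hexp : (0:ℝ) < Real.exp (-A * x) := Real.exp_pos _
          nlinarith
      have hgle : g t ≤ g 0 := hmono (Set.left_mem_Icc.mpr ht.1)
        (Set.right_mem_Icc.mpr ht.1) ht.1
      have hexp : (0:ℝ) < Real.exp (-A * t) := Real.exp_pos _
      rw [hg] at hgle
      simp only at hgle
      have : v t * Real.exp (-A * t) ≤ v 0 := by
        simpa using hgle
      calc v t = v t * Real.exp (-A * t) * Real.exp (A * t) := by
            rw [mul_assoc, ← Real.exp_add]; ring_nf; simp
        _ ≤ v 0 * Real.exp (A * t) :=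
            mul_le_mul_of_nonneg_right this (Real.exp_nonneg _)
  constructor
  · intro t ht
    exact key t ht
  · intro t ht
    have h1 := key t ht
    have hlow' := hlow (γ t) t (hIcoIcc t ht)
    have hv0 : (1:ℝ) ≤ v 0 := by
      have := hlow (γ 0) 0 (hIcoIcc 0 ⟨le_refl 0, hb⟩)
      have : 0 ≤ (1/2 : ℝ) * ‖γ' 0‖^2 := by positivity
      simp only [hv]
      nlinarith [hlow (γ 0) 0 (hIcoIcc 0 ⟨le_refl 0, hb⟩)]
    have hexpmono : Real.exp (A * t) ≤ Real.exp (A * b) :=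
      Real.exp_le_exp.mpr (mul_le_mul_of_nonneg_left ht.2.le hA.le)
    have hvt : ‖γ' t‖^2 ≤ 2 * v t := by
      simp only [hv]; nlinarith
    calc ‖γ' t‖^2 ≤ 2 * v t := hvt
      _ ≤ 2 * (v 0 * Real.exp (A * t)) := by linarith
      _ ≤ 2 * (v 0 * Real.exp (A * b)) := by
          apply mul_le_mul_of_nonneg_left _ (by norm_num)
          apply mul_le_mul_of_nonneg_left hexpmono (by linarith)
      _ = 2 * ((1/2 : ℝ) * ‖γ' 0‖^2 + V (γ 0, 0) - B) * Real.exp (A * b) := by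
          simp only [hv]; ring
end

section
/- Let V : ℝⁿ × ℝ → ℝ be a smooth proper function (preimages of compact sets are compact) bounded below along finite times with continuous β₀, and suppose |∂V/∂t(p,t)| ≤ α₀(t)(V(p,t) − β₀(t)) for continuous α₀ and all (p,t). Then along any solution γ : [0,b) → ℝⁿ of γ'' = −∇ₓV(γ,t) with b < ∞, the image γ([0,b)) is contained in a compact subset of ℝⁿ and γ' is bounded. -/
open RealInnerProductSpace

/-- Properness variant (Remark 2.5 for ℝⁿ): if V is smooth and proper, bounded
below along finite times, with |∂V/∂t| ≤ α₀(t)(V − β₀(t)), then along any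
solution of γ'' = −∇ₓV(γ,t) on [0,b), b < ∞, the image γ([0,b)) lies in a
compact set and γ' is bounded. -/
theorem stmt15 (n : ℕ) (V : EuclideanSpace ℝ (Fin n) × ℝ → ℝ)
    (hV : ContDiff ℝ (⊤ : ℕ∞) V)
    (hproper : ∀ K : Set ℝ, IsCompact K → IsCompact (V ⁻¹' K))
    (β₀ α₀ : ℝ → ℝ) (hβ : Continuous β₀) (hα : Continuous α₀)
    (hbound : ∀ p t, β₀ t ≤ V (p, t))
    (hdt : ∀ p t, |deriv (fun s => V (p, s)) t| ≤ α₀ t * (V (p, t) - β₀ t))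
    (b : ℝ) (hb : 0 < b)
    (γ γ' γ'' : ℝ → EuclideanSpace ℝ (Fin n))
    (hγ : ∀ t ∈ Set.Ico (0:ℝ) b, HasDerivAt γ (γ' t) t)
    (hγ' : ∀ t ∈ Set.Ico (0:ℝ) b, HasDerivAt γ' (γ'' t) t)
    (heq : ∀ t ∈ Set.Ico (0:ℝ) b,
      γ'' t = - gradient (fun x => V (x, t)) (γ t)) :
    (∃ K : Set (EuclideanSpace ℝ (Fin n)), IsCompact K ∧
      γ '' Set.Ico 0 b ⊆ K) ∧
    ∃ C : ℝ, ∀ t ∈ Set.Ico (0:ℝ) b, ‖γ' t‖ ≤ C := by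
  have hVd : Differentiable ℝ V := hV.differentiable (by simp)
  -- partial derivative in time
  have hpart : ∀ p t, HasDerivAt (fun s => V (p, s)) (fderiv ℝ V (p, t) (0, 1)) t := by
    intro p t
    have h1 : HasDerivAt (fun s : ℝ => ((p, s) : EuclideanSpace ℝ (Fin n) × ℝ))
        ((0 : EuclideanSpace ℝ (Fin n)), (1:ℝ)) t :=
      (hasDerivAt_const t p).prodMk (hasDerivAt_id t)
    exact (hVd (p, t)).hasFDerivAt.comp_hasDerivAt t h1
  have hpart_eq : ∀ p t, deriv (fun s => V (p, s)) t = fderiv ℝ V (p, t) (0, 1) :=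
    fun p t => (hpart p t).deriv
  -- gradient relation
  have hgrad : ∀ p t (v : EuclideanSpace ℝ (Fin n)),
      ⟪gradient (fun x => V (x, t)) p, v⟫ = fderiv ℝ V (p, t) (v, 0) := by
    intro p t v
    have h1 : HasFDerivAt (fun x : EuclideanSpace ℝ (Fin n) => ((x, t) : EuclideanSpace ℝ (Fin n) × ℝ))
        (ContinuousLinearMap.inl ℝ _ ℝ) p := (hasFDerivAt_id p).prodMk (hasFDerivAt_const t p)
    have h2 : HasFDerivAt (fun x => V (x, t))
        ((fderiv ℝ V (p, t)).comp (ContinuousLinearMap.inl ℝ _ ℝ)) p :=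
      (hVd (p, t)).hasFDerivAt.comp p h1
    rw [gradient, h2.fderiv, InnerProductSpace.toDual_symm_apply]
    rfl
  -- energy
  set E : ℝ → ℝ := fun t => ⟪γ' t, γ' t⟫ / 2 + V (γ t, t) with hEdef
  have hEder : ∀ t ∈ Set.Ico (0:ℝ) b,
      HasDerivAt E (deriv (fun s => V (γ t, s)) t) t := by
    intro t ht
    have hk : HasDerivAt (fun t => ⟪γ' t, γ' t⟫ / 2)
        ((⟪γ' t, γ'' t⟫ + ⟪γ'' t, γ' t⟫) / 2) t :=
      ((hγ' t ht).inner ℝ (hγ' t ht)).div_const 2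
    have hc : HasDerivAt (fun t => ((γ t, t) : EuclideanSpace ℝ (Fin n) × ℝ)) (γ' t, (1:ℝ)) t :=
      (hγ t ht).prodMk (hasDerivAt_id t)
    have hp : HasDerivAt (fun s => V (γ s, s)) (fderiv ℝ V (γ t, t) (γ' t, 1)) t := by
      have := HasFDerivAt.comp_hasDerivAt (x := t) (hVd _).hasFDerivAt hc
      exact this
    have hsum := hk.add hp
    refine hsum.congr_deriv ?_
    have hsplit : fderiv ℝ V (γ t, t) (γ' t, (1:ℝ))
        = fderiv ℝ V (γ t, t) (γ' t, 0) + fderiv ℝ V (γ t, t) (0, 1) := by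
      rw [← map_add]; norm_num
    rw [hpart_eq, hsplit, ← hgrad (γ t) t (γ' t), heq t ht]
    rw [inner_neg_left, inner_neg_right, real_inner_comm (γ' t)]
    ring
  -- bounds on α₀ and β₀ over [0, b]
  obtain ⟨tA, -, hA⟩ := isCompact_Icc.exists_isMaxOn (Set.nonempty_Icc.2 hb.le)
    (continuous_abs.comp hα).continuousOn
  set A := |α₀ tA| with hAdef
  have hA0 : (0:ℝ) ≤ A := abs_nonneg _
  obtain ⟨tm, -, hm⟩ := isCompact_Icc.exists_isMinOn (Set.nonempty_Icc.2 hb.le) hβ.continuousOn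
  set m := β₀ tm with hmdef
  have hmle : ∀ t ∈ Set.Ico (0:ℝ) b, m ≤ β₀ t := fun t ht => hm ⟨ht.1, ht.2.le⟩
  have hEge : ∀ t, V (γ t, t) ≤ E t := by
    intro t
    have h := real_inner_self_nonneg (x := γ' t)
    simp only [hEdef]; linarith
  have hVge : ∀ t ∈ Set.Ico (0:ℝ) b, m ≤ V (γ t, t) :=
    fun t ht => (hmle t ht).trans (hbound _ _)
  have hEm : ∀ t ∈ Set.Ico (0:ℝ) b, m ≤ E t := fun t ht => (hVge t ht).trans (hEge t)
  -- Gronwall-type estimate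
  set g : ℝ → ℝ := fun t => (E t - m) * Real.exp (-A * t) with hgdef
  have hgd : ∀ t ∈ Set.Ico (0:ℝ) b, HasDerivAt g
      (deriv (fun s => V (γ t, s)) t * Real.exp (-A * t)
        + (E t - m) * (Real.exp (-A * t) * -A)) t := by
    intro t ht
    have h1 : HasDerivAt (fun t : ℝ => -A * t) (-A) t := by
      simpa using (hasDerivAt_id t).const_mul (-A)
    have hexp : HasDerivAt (fun t : ℝ => Real.exp (-A * t)) (Real.exp (-A * t) * -A) t :=
      (Real.hasDerivAt_exp (-A * t)).comp t h1
    exact ((hEder t ht).sub_const m).mul hexp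
  have hganti : AntitoneOn g (Set.Ico 0 b) := by
    apply antitoneOn_of_deriv_nonpos (convex_Ico 0 b)
    · exact fun t ht => (hgd t ht).continuousAt.continuousWithinAt
    · intro t ht
      rw [interior_Ico] at ht
      exact (hgd t ⟨ht.1.le, ht.2⟩).differentiableAt.differentiableWithinAt
    · intro t ht
      rw [interior_Ico] at ht
      have ht' : t ∈ Set.Ico (0:ℝ) b := ⟨ht.1.le, ht.2⟩
      rw [(hgd t ht').deriv]
      have h1 : deriv (fun s => V (γ t, s)) t ≤ A * (E t - m) := by
        have h3 : α₀ t ≤ A := (le_abs_self _).trans (hA ⟨ht'.1, ht'.2.le⟩)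
        have h4 : (0:ℝ) ≤ V (γ t, t) - β₀ t := sub_nonneg.2 (hbound _ _)
        have h5 : V (γ t, t) - β₀ t ≤ E t - m := by
          have h6 := hEge t; have h7 := hmle t ht'; linarith
        calc deriv (fun s => V (γ t, s)) t ≤ |deriv (fun s => V (γ t, s)) t| := le_abs_self _
          _ ≤ α₀ t * (V (γ t, t) - β₀ t) := hdt (γ t) t
          _ ≤ A * (V (γ t, t) - β₀ t) := mul_le_mul_of_nonneg_right h3 h4
          _ ≤ A * (E t - m) := mul_le_mul_of_nonneg_left h5 hA0
      have hexp0 : (0:ℝ) < Real.exp (-A * t) := Real.exp_pos _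
      nlinarith
  set M := m + (E 0 - m) * Real.exp (A * b) with hMdef
  have hEle : ∀ t ∈ Set.Ico (0:ℝ) b, E t ≤ M := by
    intro t ht
    have h0 : (0:ℝ) ∈ Set.Ico (0:ℝ) b := ⟨le_refl 0, hb⟩
    have hmono := hganti h0 ht ht.1
    have hg0 : g 0 = E 0 - m := by simp [hgdef]
    rw [hg0] at hmono
    have hE0m : (0:ℝ) ≤ E 0 - m := sub_nonneg.2 (hEm 0 h0)
    have hcancel : Real.exp (-A * t) * Real.exp (A * t) = 1 := by
      rw [← Real.exp_add]; norm_num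
    have h1 : E t - m ≤ (E 0 - m) * Real.exp (A * t) := by
      calc E t - m = (E t - m) * Real.exp (-A * t) * Real.exp (A * t) := by
            rw [mul_assoc, hcancel, mul_one]
        _ ≤ (E 0 - m) * Real.exp (A * t) :=
            mul_le_mul_of_nonneg_right hmono (Real.exp_pos _).le
    have h2 : Real.exp (A * t) ≤ Real.exp (A * b) :=
      Real.exp_le_exp.2 (mul_le_mul_of_nonneg_left ht.2.le hA0)
    have h3 : (E 0 - m) * Real.exp (A * t) ≤ (E 0 - m) * Real.exp (A * b) :=
      mul_le_mul_of_nonneg_left h2 hE0m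
    simp only [hMdef]; linarith
  constructor
  · refine ⟨Prod.fst '' (V ⁻¹' Set.Icc m M), (hproper _ isCompact_Icc).image continuous_fst, ?_⟩
    rintro x ⟨t, ht, rfl⟩
    exact ⟨(γ t, t), ⟨hVge t ht, (hEge t).trans (hEle t ht)⟩, rfl⟩
  · refine ⟨Real.sqrt (2 * (M - m)), fun t ht => ?_⟩
    have hnorm : ‖γ' t‖ = Real.sqrt ⟪γ' t, γ' t⟫ := by
      rw [real_inner_self_eq_norm_sq, Real.sqrt_sq (norm_nonneg _)]
    rw [hnorm]
    apply Real.sqrt_le_sqrt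
    have h1 := hEle t ht
    have h2 := hVge t ht
    simp only [hEdef] at h1
    linarith
end
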